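/- arXiv:2605.30164 — 6 statements merged into one kernel-verified Lean document; each statement's English description precedes it below -/
import Mathlib

section
/- With the matrix M(λ) and Δ(λ) = det M(λ) as defined (N ≥ 1, p₀ ≠ 0): if N is odd, then Δ(λ), viewed as a polynomial in λ, has degree at most (N+1)/2, and its coefficient of λ^{(N+1)/2} equals (−1)^{(3N−1)/2} · (N!)² · p₀^{(N+1)/2} / ( 2^{(N−1)/2} · ((N−1)/2)! · (N−1)!! ), where (N−1)!! denotes the double factorial. In particular this coefficient is nonzero, so Δ is not identically zero when N is odd. -/
/-!
Expanding `det M(λ)` over permutations `σ`, the factor `M(σ i, i)` has degree one in `λ` when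
`σ i > i`, is constant when `σ i ∈ {i, i - 1}` and vanishes when `σ i < i - 1`. Since the
displacements `σ i - i` sum to zero, each nonzero term has at most `(N + 1) / 2` ascents, with
equality exactly when `|σ i - i| = 1` for every `i`. Hence the coefficient of `λ^((N+1)/2)` is the
determinant of the tridiagonal matrix with zero diagonal, subdiagonal entries `p₀` and
superdiagonal entries `r (N - r + 1)`, which the continuant recursion evaluates to
`(-p₀)^((N+1)/2) (N‼)²`.
-/

open Polynomial

noncomputable section

/-- The `(N+1)×(N+1)` matrix `M(λ)` (rows/columns re-indexed from `0` to `N`; in the paper's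
`1,…,N+1` indexing, `M_{r,c} = a_{r−c−1}(λ)` for `c ≤ r`, `M_{r,c} = r·(N−r+1)` for
`c = r+1`, and `0` otherwise, where `a₋₁(λ) = u₋₁` and `a_j(λ) = u_j + λ·p_j` for `j ≥ 0`).
Its entries are polynomials in `λ` (the variable `X`). -/
def Mmat (N : ℕ) (um1 : ℂ) (u p : ℕ → ℂ) : Matrix (Fin (N + 1)) (Fin (N + 1)) ℂ[X] :=
  Matrix.of fun r c : Fin (N + 1) =>
    if (c : ℕ) = (r : ℕ) then C um1
    else if (c : ℕ) < (r : ℕ) then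
      C (u ((r : ℕ) - (c : ℕ) - 1)) + X * C (p ((r : ℕ) - (c : ℕ) - 1))
    else if (c : ℕ) = (r : ℕ) + 1 then C (((((r : ℕ) + 1) * (N - (r : ℕ)) : ℕ) : ℂ))
    else 0

/-- `Δ = det M(λ)`, a polynomial in `λ`. -/
def DeltaPoly (N : ℕ) (um1 : ℂ) (u p : ℕ → ℂ) : ℂ[X] :=
  (Mmat N um1 u p).det

namespace Polynomial

theorem coeff_prod_sum_of_natDegree_le {ι R : Type*} [CommSemiring R] (s : Finset ι)
    (f : ι → R[X]) (d : ι → ℕ) (h : ∀ i ∈ s, (f i).natDegree ≤ d i) :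
    (∏ i ∈ s, f i).coeff (∑ i ∈ s, d i) = ∏ i ∈ s, (f i).coeff (d i) := by
  induction s using Finset.cons_induction with
  | empty => simp
  | cons a s ha ih =>
    rw [Finset.forall_mem_cons] at h
    rw [Finset.prod_cons, Finset.sum_cons, Finset.prod_cons,
      coeff_mul_add_eq_of_natDegree_le h.1
        ((natDegree_prod_le s f).trans (Finset.sum_le_sum h.2)), ih h.2]

end Polynomial

namespace Matrix

open Equiv

section Polynomial

variable {n R : Type*} [Fintype n] [DecidableEq n] [CommRing R]

theorem natDegree_det_le_of_forall_perm {A : Matrix n n R[X]} {k : ℕ}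
    (h : ∀ σ : Perm n, (∏ i, A (σ i) i).natDegree ≤ k) : A.det.natDegree ≤ k := by
  rw [det_apply]
  exact natDegree_sum_le_of_forall_le _ _ fun σ _ => (natDegree_smul_le _ _).trans (h σ)

theorem coeff_det_eq_det_of_forall_perm {A : Matrix n n R[X]} {B : Matrix n n R} {k : ℕ}
    (h : ∀ σ : Perm n, (∏ i, A (σ i) i).coeff k = ∏ i, B (σ i) i) :
    A.det.coeff k = B.det := by
  simp only [det_apply', finsetSum_coeff, coeff_intCast_mul, h]

end Polynomial

section Tridiagonal

variable {R : Type*} [CommRing R]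

def tridiagonalZeroDiag (a b : ℕ → R) (m : ℕ) : Matrix (Fin m) (Fin m) R :=
  of fun i j => if (j : ℕ) = i + 1 then a i else if (i : ℕ) = j + 1 then b j else 0

theorem det_tridiagonalZeroDiag_add_two (a b : ℕ → R) (m : ℕ) :
    (tridiagonalZeroDiag a b (m + 2)).det =
      -(a 0 * b 0) * (tridiagonalZeroDiag (fun k => a (k + 2)) (fun k => b (k + 2)) m).det := by
  set T := tridiagonalZeroDiag a b (m + 2)
  have hminor : (T.submatrix Fin.succ (Fin.succAbove 1)).submatrix (Fin.succAbove 0) Fin.succ =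
      tridiagonalZeroDiag (fun k => a (k + 2)) (fun k => b (k + 2)) m := by
    ext i j
    simp [T, tridiagonalZeroDiag, Fin.succAbove]
  rw [det_succ_row_zero, Finset.sum_eq_single 1, det_succ_column_zero, Finset.sum_eq_single 0,
    hminor]
  · simp [T, tridiagonalZeroDiag, mul_assoc]
  · intro i _ hi
    simp [T, tridiagonalZeroDiag, Fin.val_ne_zero_iff.mpr hi, Fin.succAbove]
  · simp
  · intro j _ hj
    have hj' : (j : ℕ) ≠ 1 := fun h => hj (Fin.ext h)
    simp [T, tridiagonalZeroDiag, hj']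
  · simp

theorem det_tridiagonalZeroDiag_two_mul (a b : ℕ → R) (k : ℕ) :
    (tridiagonalZeroDiag a b (2 * k)).det = ∏ t ∈ Finset.range k, -(a (2 * t) * b (2 * t)) := by
  induction k generalizing a b with
  | zero => simp
  | succ k ih =>
    rw [show 2 * (k + 1) = 2 * k + 2 by ring, det_tridiagonalZeroDiag_add_two, ih,
      Finset.prod_range_succ' _ k]
    simp only [mul_add, mul_zero]
    ring

end Tridiagonal

end Matrix

section Displacement

open Finset

namespace Equiv.Perm

variable {n : ℕ} (σ : Perm (Fin n))

theorem two_mul_card_lt_apply_eq_sum :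
    (2 * #{i : Fin n | (i : ℕ) < σ i} : ℤ) =
      ∑ i : Fin n, (2 * (if (i : ℕ) < σ i then 1 else 0) - ((σ i : ℤ) - i)) := by
  have hdisp : ∑ i : Fin n, ((σ i : ℤ) - i) = 0 := by
    rw [sum_sub_distrib, sub_eq_zero]
    exact Equiv.sum_comp σ fun i : Fin n => (i : ℤ)
  rw [sum_sub_distrib, hdisp, sub_zero, ← mul_sum, sum_boole]

theorem two_mul_card_lt_apply_le (h : ∀ i : Fin n, (i : ℕ) ≤ σ i + 1) :
    2 * #{i : Fin n | (i : ℕ) < σ i} ≤ n := by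
  have hsum := σ.two_mul_card_lt_apply_eq_sum
  have hle : ∑ i : Fin n, (2 * (if (i : ℕ) < σ i then 1 else 0) - ((σ i : ℤ) - i)) ≤
      ∑ _i : Fin n, 1 :=
    sum_le_sum fun i _ => by have := h i; split_ifs <;> omega
  simp only [sum_const, card_univ, Fintype.card_fin, nsmul_eq_mul, mul_one] at hle
  omega

theorem two_mul_card_lt_apply_eq_iff (h : ∀ i : Fin n, (i : ℕ) ≤ σ i + 1) :
    2 * #{i : Fin n | (i : ℕ) < σ i} = n ↔
      ∀ i : Fin n, (σ i : ℕ) = i + 1 ∨ (σ i : ℕ) + 1 = i := by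
  have hsum := σ.two_mul_card_lt_apply_eq_sum
  have hiff := sum_eq_sum_iff_of_le (s := univ) (g := fun _ => (1 : ℤ))
    (f := fun i : Fin n => 2 * (if (i : ℕ) < σ i then 1 else 0) - ((σ i : ℤ) - i))
    fun i _ => by have := h i; split_ifs <;> omega
  simp only [sum_const, card_univ, Fintype.card_fin, nsmul_eq_mul, mul_one, mem_univ,
    forall_const] at hiff
  rw [← hsum] at hiff
  constructor
  · intro hn i
    have := (hiff.1 (by exact_mod_cast congrArg ((↑) : ℕ → ℤ) hn)) i
    split_ifs at this <;> omega
  · intro hadj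
    have := hiff.2 fun i => by have := hadj i; split_ifs <;> omega
    omega

end Equiv.Perm

end Displacement

section Mmat

open Finset

variable {N : ℕ} {um1 : ℂ} {u p : ℕ → ℂ}

theorem Mmat_apply_of_lt {r c : Fin (N + 1)} (h : (c : ℕ) < r) :
    Mmat N um1 u p r c = C (u (r - c - 1)) + X * C (p (r - c - 1)) := by
  simp only [Mmat, Matrix.of_apply]
  rw [if_neg (by omega), if_pos h]

theorem Mmat_apply_of_eq_add_one {r c : Fin (N + 1)} (h : (c : ℕ) = r + 1) :
    Mmat N um1 u p r c = C ((((r : ℕ) + 1) * (N - r) : ℕ) : ℂ) := by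
  simp only [Mmat, Matrix.of_apply]
  rw [if_neg (by omega), if_neg (by omega), if_pos h]

theorem Mmat_apply_of_add_one_lt {r c : Fin (N + 1)} (h : (r : ℕ) + 1 < c) :
    Mmat N um1 u p r c = 0 := by
  simp only [Mmat, Matrix.of_apply]
  rw [if_neg (by omega), if_neg (by omega), if_neg (by omega)]

theorem natDegree_Mmat_apply_le (r c : Fin (N + 1)) :
    (Mmat N um1 u p r c).natDegree ≤ if (c : ℕ) < r then 1 else 0 := by
  by_cases h : (c : ℕ) < r
  · rw [if_pos h, Mmat_apply_of_lt h]
    compute_degree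
  · rw [if_neg h]
    simp only [Mmat, Matrix.of_apply]
    split_ifs <;> first | omega | exact (natDegree_C _).le | simp

/-- The coefficients of `λ^[c < r]` in the entries `M(r, c)` with `|r - c| = 1`. -/
def Mlead (N : ℕ) (p0 : ℂ) : Matrix (Fin (N + 1)) (Fin (N + 1)) ℂ :=
  Matrix.tridiagonalZeroDiag (fun r => (((r + 1) * (N - r) : ℕ) : ℂ)) (fun _ => p0) (N + 1)

theorem coeff_Mmat_apply_of_adjacent {r c : Fin (N + 1)}
    (h : (r : ℕ) = c + 1 ∨ (r : ℕ) + 1 = c) :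
    (Mmat N um1 u p r c).coeff (if (c : ℕ) < r then 1 else 0) = Mlead N (p 0) r c := by
  simp only [Mlead, Matrix.tridiagonalZeroDiag, Matrix.of_apply]
  rcases h with h | h
  · rw [if_pos (by omega), Mmat_apply_of_lt (by omega), show (r : ℕ) - c - 1 = 0 by omega,
      if_neg (by omega), if_pos h]
    simp
  · rw [if_neg (by omega), Mmat_apply_of_eq_add_one h.symm, if_pos h.symm, coeff_C_zero]

theorem Mlead_apply_eq_zero {p0 : ℂ} {r c : Fin (N + 1)}
    (h : ¬((r : ℕ) = c + 1 ∨ (r : ℕ) + 1 = c)) : Mlead N p0 r c = 0 := by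
  simp only [Mlead, Matrix.tridiagonalZeroDiag, Matrix.of_apply]
  rw [if_neg (by omega), if_neg (by omega)]

variable (σ : Equiv.Perm (Fin (N + 1)))

theorem natDegree_prod_Mmat_le_card :
    (∏ i, Mmat N um1 u p (σ i) i).natDegree ≤ #{i : Fin (N + 1) | (i : ℕ) < σ i} := by
  refine (natDegree_prod_le _ _).trans
    ((sum_le_sum fun i _ => natDegree_Mmat_apply_le _ _).trans ?_)
  rw [sum_boole, Nat.cast_id]

theorem prod_Mmat_eq_zero (h : ¬∀ i : Fin (N + 1), (i : ℕ) ≤ σ i + 1) :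
    ∏ i, Mmat N um1 u p (σ i) i = 0 := by
  obtain ⟨i, hi⟩ := not_forall.1 h
  exact prod_eq_zero (mem_univ i) (Mmat_apply_of_add_one_lt (by omega))

theorem natDegree_prod_Mmat_le {m : ℕ} (hm : N + 1 = 2 * m) :
    (∏ i, Mmat N um1 u p (σ i) i).natDegree ≤ m := by
  by_cases hlow : ∀ i : Fin (N + 1), (i : ℕ) ≤ σ i + 1
  · have := σ.two_mul_card_lt_apply_le hlow
    have := natDegree_prod_Mmat_le_card (um1 := um1) (u := u) (p := p) σ
    omega
  · simp [prod_Mmat_eq_zero σ hlow]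

theorem coeff_prod_Mmat {m : ℕ} (hm : N + 1 = 2 * m) :
    (∏ i, Mmat N um1 u p (σ i) i).coeff m = ∏ i, Mlead N (p 0) (σ i) i := by
  by_cases hadj : ∀ i : Fin (N + 1), (σ i : ℕ) = i + 1 ∨ (σ i : ℕ) + 1 = i
  · have hcard := (σ.two_mul_card_lt_apply_eq_iff fun i => by have := hadj i; omega).2 hadj
    have hm' : m = ∑ i : Fin (N + 1), if (i : ℕ) < σ i then 1 else 0 := by
      rw [sum_boole, Nat.cast_id]
      omega
    rw [hm', coeff_prod_sum_of_natDegree_le _ _ _ fun i _ => natDegree_Mmat_apply_le _ _]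
    exact prod_congr rfl fun i _ => coeff_Mmat_apply_of_adjacent (hadj i)
  · obtain ⟨i₀, hi₀⟩ := not_forall.1 hadj
    rw [prod_eq_zero (f := fun i => Mlead N (p 0) (σ i) i) (mem_univ i₀)
      (Mlead_apply_eq_zero (by omega))]
    by_cases hlow : ∀ i : Fin (N + 1), (i : ℕ) ≤ σ i + 1
    · apply coeff_eq_zero_of_natDegree_lt
      have hne := mt (σ.two_mul_card_lt_apply_eq_iff hlow).1 fun h => by have := h i₀; omega
      have := σ.two_mul_card_lt_apply_le hlow
      have := natDegree_prod_Mmat_le_card (um1 := um1) (u := u) (p := p) σ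
      omega
    · simp [prod_Mmat_eq_zero σ hlow]

theorem natDegree_DeltaPoly_le {m : ℕ} (hm : N + 1 = 2 * m) :
    (DeltaPoly N um1 u p).natDegree ≤ m :=
  Matrix.natDegree_det_le_of_forall_perm fun σ => natDegree_prod_Mmat_le σ hm

theorem coeff_DeltaPoly_eq_det_Mlead {m : ℕ} (hm : N + 1 = 2 * m) :
    (DeltaPoly N um1 u p).coeff m = (Mlead N (p 0)).det :=
  Matrix.coeff_det_eq_det_of_forall_perm fun σ => coeff_prod_Mmat σ hm

end Mmat

namespace Nat

theorem prod_range_succ_two_mul_add_one (k : ℕ) :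
    ∏ t ∈ Finset.range (k + 1), (2 * t + 1) = (2 * k + 1)‼ := by
  induction k with
  | zero => rfl
  | succ k ih =>
    rw [Finset.prod_range_succ, ih, show 2 * (k + 1) + 1 = 2 * k + 1 + 2 by ring,
      doubleFactorial_add_two, mul_comm]

theorem prod_range_succ_odd_mul_reflect (k : ℕ) :
    ∏ t ∈ Finset.range (k + 1), (2 * t + 1) * (2 * k + 1 - 2 * t) = ((2 * k + 1)‼) ^ 2 := by
  have hreflect : ∏ t ∈ Finset.range (k + 1), (2 * k + 1 - 2 * t) =
      ∏ t ∈ Finset.range (k + 1), (2 * (k + 1 - 1 - t) + 1) :=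
    Finset.prod_congr rfl fun t ht => by have := Finset.mem_range.1 ht; omega
  rw [Finset.prod_mul_distrib, hreflect, Finset.prod_range_reflect (fun t => 2 * t + 1),
    prod_range_succ_two_mul_add_one, sq]

end Nat

theorem coeff_DeltaPoly_two_mul_add_one (k : ℕ) (um1 : ℂ) (u p : ℕ → ℂ) :
    (DeltaPoly (2 * k + 1) um1 u p).coeff (k + 1) =
      (-1) ^ (k + 1) * (Nat.doubleFactorial (2 * k + 1) : ℂ) ^ 2 * p 0 ^ (k + 1) := by
  rw [coeff_DeltaPoly_eq_det_Mlead (by ring), Mlead,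
    show 2 * k + 1 + 1 = 2 * (k + 1) by ring, Matrix.det_tridiagonalZeroDiag_two_mul,
    ← Nat.cast_pow, ← Nat.prod_range_succ_odd_mul_reflect, Nat.cast_prod, Finset.prod_neg,
    Finset.prod_mul_distrib, Finset.prod_const, Finset.card_range, mul_assoc]

theorem delta_leading_coeff_odd_general (N : ℕ) (hodd : Odd N)
    (um1 : ℂ) (u p : ℕ → ℂ) (hp0 : p 0 ≠ 0) :
    (DeltaPoly N um1 u p).degree ≤ (((N + 1) / 2 : ℕ) : WithBot ℕ) ∧
    (DeltaPoly N um1 u p).coeff ((N + 1) / 2) =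
      (-1) ^ ((3 * N - 1) / 2) * ((N.factorial : ℂ)) ^ 2 * p 0 ^ ((N + 1) / 2) /
        (2 ^ ((N - 1) / 2) * ((((N - 1) / 2).factorial : ℕ) : ℂ) *
          ((Nat.doubleFactorial (N - 1) : ℕ) : ℂ)) ∧
    (DeltaPoly N um1 u p).coeff ((N + 1) / 2) ≠ 0 ∧
    DeltaPoly N um1 u p ≠ 0 := by
  obtain ⟨k, rfl⟩ := hodd
  have hcoeff := coeff_DeltaPoly_two_mul_add_one k um1 u p
  have hne : (DeltaPoly (2 * k + 1) um1 u p).coeff (k + 1) ≠ 0 := by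
    rw [hcoeff]
    simp [hp0, (Nat.doubleFactorial_pos _).ne']
  rw [show (2 * k + 1 + 1) / 2 = k + 1 by omega,
    show (3 * (2 * k + 1) - 1) / 2 = 2 * k + (k + 1) by omega,
    show 2 * k + 1 - 1 = 2 * k by omega, show 2 * k / 2 = k by omega]
  refine ⟨natDegree_le_iff_degree_le.1 (natDegree_DeltaPoly_le (by ring)), ?_, hne,
    fun h => hne (by rw [h, coeff_zero])⟩
  have hsign : (-1 : ℂ) ^ (2 * k + (k + 1)) = (-1) ^ (k + 1) := by
    rw [pow_add, pow_mul, neg_one_sq, one_pow, one_mul]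
  have hfac : (k.factorial : ℂ) ≠ 0 := Nat.cast_ne_zero.2 k.factorial_ne_zero
  rw [hcoeff, hsign, Nat.factorial_eq_mul_doubleFactorial, Nat.doubleFactorial_two_mul]
  push_cast
  field_simp

/-- For odd `N`, the polynomial `Δ(λ)` has degree at most `(N+1)/2`, its coefficient of
`λ^{(N+1)/2}` equals
`(−1)^{(3N−1)/2}·(N!)²·p₀^{(N+1)/2} / (2^{(N−1)/2}·((N−1)/2)!·(N−1)‼)`;
in particular this coefficient is nonzero and `Δ` is not identically zero. -/
theorem delta_leading_coeff_odd (N : ℕ) (hN : 1 ≤ N) (hodd : Odd N)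
    (um1 : ℂ) (u p : ℕ → ℂ) (hp0 : p 0 ≠ 0) :
    (DeltaPoly N um1 u p).degree ≤ (((N + 1) / 2 : ℕ) : WithBot ℕ) ∧
    (DeltaPoly N um1 u p).coeff ((N + 1) / 2) =
      (-1) ^ ((3 * N - 1) / 2) * ((N.factorial : ℂ)) ^ 2 * p 0 ^ ((N + 1) / 2) /
        (2 ^ ((N - 1) / 2) * ((((N - 1) / 2).factorial : ℕ) : ℂ) *
          ((Nat.doubleFactorial (N - 1) : ℕ) : ℂ)) ∧
    (DeltaPoly N um1 u p).coeff ((N + 1) / 2) ≠ 0 ∧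
    DeltaPoly N um1 u p ≠ 0 :=
  delta_leading_coeff_odd_general N hodd um1 u p hp0
end
end

section
/- For every natural number m, 2 · ∑_{j=0}^{m} (m−j)·(j+1) · C(2(m−j), m−j) · C(2(j+1), j+1) = m·(m+1)·4^m, where C(2k, k) denotes the central binomial coefficient. -/
/-!
The recurrence `(n + 1) C(n + 1) = 4 n C(n) + 2 C(n)` turns each convolution weighted by `j C(j)`
into a first-order recursion in `n`. Together with the symmetry `j ↔ n - j`, which gives
`2 ∑ j C(j) C(n - j) = n ∑ C(j) C(n - j)`, this yields `∑ C(j) C(n - j) = 4 ^ n`, then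
`2 ∑ j C(j) C(n - j) = n 4 ^ n`, and finally the doubly weighted sum
`2 ∑ j C(j) (n + 1 - j) C(n + 1 - j) = n (n + 1) 4 ^ n`, which is the theorem after `j ↦ j + 1`.
-/

open Finset Nat

theorem succ_mul_centralBinom_succ_eq (n : ℕ) :
    (n + 1) * centralBinom (n + 1) = 4 * (n * centralBinom n) + 2 * centralBinom n := by
  rw [succ_mul_centralBinom_succ]
  ring

theorem sum_antidiagonal_succ_mul_centralBinom_mul (g : ℕ → ℕ) (n : ℕ) :
    ∑ p ∈ antidiagonal (n + 1), p.1 * centralBinom p.1 * g p.2 =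
      4 * ∑ p ∈ antidiagonal n, p.1 * centralBinom p.1 * g p.2 +
        2 * ∑ p ∈ antidiagonal n, centralBinom p.1 * g p.2 := by
  rw [Nat.sum_antidiagonal_succ, zero_mul, zero_mul, zero_add, mul_sum, mul_sum,
    ← sum_add_distrib]
  refine sum_congr rfl fun p _ => ?_
  rw [succ_mul_centralBinom_succ_eq]
  ring

theorem sum_antidiagonal_mul_comm (f g : ℕ → ℕ) (n : ℕ) :
    ∑ p ∈ antidiagonal n, f p.1 * g p.2 = ∑ p ∈ antidiagonal n, g p.1 * f p.2 := by
  rw [← Nat.sum_antidiagonal_swap]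
  exact sum_congr rfl fun p _ => mul_comm _ _

theorem two_mul_sum_antidiagonal_mul_centralBinom_eq_mul_sum (n : ℕ) :
    2 * ∑ p ∈ antidiagonal n, p.1 * centralBinom p.1 * centralBinom p.2 =
      n * ∑ p ∈ antidiagonal n, centralBinom p.1 * centralBinom p.2 := by
  rw [two_mul]
  nth_rw 2 [sum_antidiagonal_mul_comm (fun k => k * centralBinom k) centralBinom]
  rw [← sum_add_distrib, mul_sum]
  refine sum_congr rfl fun p hp => ?_
  rw [← mem_antidiagonal.mp hp]
  ring

theorem sum_antidiagonal_centralBinom_mul_centralBinom (n : ℕ) :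
    ∑ p ∈ antidiagonal n, centralBinom p.1 * centralBinom p.2 = 4 ^ n := by
  induction n with
  | zero => simp
  | succ n ih =>
    refine Nat.eq_of_mul_eq_mul_left n.succ_pos ?_
    have step := sum_antidiagonal_succ_mul_centralBinom_mul centralBinom n
    have sym := two_mul_sum_antidiagonal_mul_centralBinom_eq_mul_sum n
    rw [ih] at step sym
    rw [← two_mul_sum_antidiagonal_mul_centralBinom_eq_mul_sum, step, pow_succ]
    linarith

theorem two_mul_sum_antidiagonal_mul_centralBinom_eq (n : ℕ) :
    2 * ∑ p ∈ antidiagonal n, p.1 * centralBinom p.1 * centralBinom p.2 = n * 4 ^ n := by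
  rw [two_mul_sum_antidiagonal_mul_centralBinom_eq_mul_sum,
    sum_antidiagonal_centralBinom_mul_centralBinom]

theorem two_mul_sum_antidiagonal_mul_mul_centralBinom (n : ℕ) :
    2 * ∑ p ∈ antidiagonal (n + 1), p.1 * centralBinom p.1 * (p.2 * centralBinom p.2) =
      n * (n + 1) * 4 ^ n := by
  induction n with
  | zero => simp [Nat.sum_antidiagonal_succ]
  | succ n ih =>
    have step := sum_antidiagonal_succ_mul_centralBinom_mul (fun k => k * centralBinom k) (n + 1)
    have weighted := two_mul_sum_antidiagonal_mul_centralBinom_eq (n + 1)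
    rw [← sum_antidiagonal_mul_comm (fun k => k * centralBinom k) centralBinom] at step
    rw [pow_succ] at weighted ⊢
    linarith

/-- `2·∑_{j=0}^{m} (m−j)·(j+1)·C(2(m−j),m−j)·C(2(j+1),j+1) = m·(m+1)·4^m`. -/
theorem centralBinom_weighted_convolution (m : ℕ) :
    2 * ∑ j ∈ Finset.range (m + 1),
        (m - j) * (j + 1) * Nat.centralBinom (m - j) * Nat.centralBinom (j + 1) =
      m * (m + 1) * 4 ^ m := by
  rw [← two_mul_sum_antidiagonal_mul_mul_centralBinom, Nat.sum_antidiagonal_succ,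
    Nat.sum_antidiagonal_eq_sum_range_succ_mk, zero_mul, zero_mul, zero_add]
  exact congrArg (2 * ·) (sum_congr rfl fun j _ => by ring)
end

section
/- Let K be a commutative ring equipped with a derivation d (written f ↦ f′), let P ∈ K be a unit, and let g ∈ K. Define maps L, L̃, D : K → K by L f = P⁻¹·((f′ − g·f)′ + g·(f′ − g·f)), L̃ f = P⁻¹·((f′ + g·f)′ − (g + P′·P⁻¹)·(f′ + g·f)), and D f = f′ − g·f. Then for every f ∈ K one has L̃(D f) = D(L f). -/
/-!
Write `B f = (f′ − g·f)′ + g·(f′ − g·f)`, so that `L f = P⁻¹·B f`. The operator `L̃` applied to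
`D f` produces the same expression `B f`, namely `L̃ (D f) = P⁻¹·((B f)′ − g·B f) − P′·P⁻²·B f`,
while `D (L f) = (P⁻¹·B f)′ − g·P⁻¹·B f`. By the Leibniz rule the two agree exactly because
`(P⁻¹)′ = −P′·P⁻²`.
-/

def AddMonoidHom.toDerivation {K : Type*} [CommRing K] (d : K →+ K)
    (hd : ∀ a b : K, d (a * b) = a * d b + d a * b) : Derivation ℤ K K :=
  Derivation.mk' d.toIntLinearMap fun a b => by
    simp only [AddMonoidHom.coe_toIntLinearMap, hd, smul_eq_mul, mul_comm b]

theorem AddMonoidHom.map_units_inv_of_leibniz {K : Type*} [CommRing K] (d : K →+ K)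
    (hd : ∀ a b : K, d (a * b) = a * d b + d a * b) (u : Kˣ) :
    d ↑u⁻¹ = -(↑u⁻¹ : K) ^ 2 * d ↑u :=
  (d.toDerivation hd).leibniz_of_mul_eq_one u.inv_mul

/-- Intertwining property of the Darboux transformation: for a commutative ring `K` with a
derivation `d` (an additive map satisfying the Leibniz rule), a unit `P` and `g ∈ K`,
setting `L f = P⁻¹·((f′ − g·f)′ + g·(f′ − g·f))`,
`L̃ f = P⁻¹·((f′ + g·f)′ − (g + P′·P⁻¹)·(f′ + g·f))` and `D f = f′ − g·f`,
one has `L̃(D f) = D(L f)` for all `f`. -/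
theorem darboux_intertwining (K : Type*) [CommRing K] (d : K →+ K)
    (hd : ∀ a b : K, d (a * b) = a * d b + d a * b)
    (P : Kˣ) (g : K)
    (L Lt D : K → K)
    (hL : ∀ f, L f = (↑P⁻¹ : K) * (d (d f - g * f) + g * (d f - g * f)))
    (hLt : ∀ f, Lt f =
      (↑P⁻¹ : K) * (d (d f + g * f) - (g + d (↑P : K) * (↑P⁻¹ : K)) * (d f + g * f)))
    (hD : ∀ f, D f = d f - g * f) :
    ∀ f : K, Lt (D f) = D (L f) := by
  intro f
  set B := d (d f - g * f) + g * (d f - g * f)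
  have hinv := d.map_units_inv_of_leibniz hd P
  calc Lt (D f) = (↑P⁻¹ : K) * (d B - (g + d ↑P * ↑P⁻¹) * B) := by rw [hLt, hD]
    _ = d (↑P⁻¹ * B) - g * (↑P⁻¹ * B) := by rw [hd, hinv]; ring
    _ = D (L f) := by rw [hL, hD]
end

section
/- Let f, T₀, T₁, y₀, y₁ be complex polynomials with f nonconstant and T₀, T₁, y₀, y₁ nonzero, and let ∘ denote polynomial composition. Then: (a) if ỹ₀ is a polynomial with Wr(y₀, ỹ₀) = T₀·y₁², then Wr(y₀∘f, ỹ₀∘f) = (f′·(T₀∘f))·(y₁∘f)²; consequently, if (y₀,y₁) is fertile with respect to (T₀,T₁), then (y₀∘f, y₁∘f) is fertile with respect to (f′·(T₀∘f), f′·(T₁∘f)); and (b) if a pair (u₀,u₁) is obtained from (y₀,y₁) by a finite sequence of reproductions with respect to (T₀,T₁), then (u₀∘f, u₁∘f) is obtained from (y₀∘f, y₁∘f) by a finite sequence of reproductions with respect to (f′·(T₀∘f), f′·(T₁∘f)). -/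
open Polynomial

noncomputable section

/-- The Wronskian of two polynomials: `Wr(f,g) = f·g′ − f′·g`. -/
def pWr (f g : ℂ[X]) : ℂ[X] := f * derivative g - derivative f * g

/-- A pair `y = (y₀,y₁)` of nonzero polynomials is fertile with respect to a pair
`T = (T₀,T₁)` if there exist `ỹ₀, ỹ₁` with `Wr(y₀,ỹ₀) = T₀·y₁²` and `Wr(y₁,ỹ₁) = T₁·y₀²`. -/
def Fertile (T y : ℂ[X] × ℂ[X]) : Prop :=
  y.1 ≠ 0 ∧ y.2 ≠ 0 ∧
  ∃ ty0 ty1 : ℂ[X], pWr y.1 ty0 = T.1 * y.2 ^ 2 ∧ pWr y.2 ty1 = T.2 * y.1 ^ 2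

/-- Reproduction in direction 0: replace `(y₀,y₁)` by `(ỹ₀,y₁)` with `Wr(y₀,ỹ₀) = T₀·y₁²`. -/
def Reprod0 (T y z : ℂ[X] × ℂ[X]) : Prop :=
  z.2 = y.2 ∧ pWr y.1 z.1 = T.1 * y.2 ^ 2

/-- Reproduction in direction 1: replace `(y₀,y₁)` by `(y₀,ỹ₁)` with `Wr(y₁,ỹ₁) = T₁·y₀²`. -/
def Reprod1 (T y z : ℂ[X] × ℂ[X]) : Prop :=
  z.1 = y.1 ∧ pWr y.2 z.2 = T.2 * y.1 ^ 2

/-- Reproduction (in either direction). -/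
def Reprod (T y z : ℂ[X] × ℂ[X]) : Prop := Reprod0 T y z ∨ Reprod1 T y z

/-- A pair is super-fertile w.r.t. `T` if every pair obtained from it by a finite (possibly
empty) sequence of reproductions w.r.t. `T` is fertile w.r.t. `T`. -/
def SuperFertile (T y : ℂ[X] × ℂ[X]) : Prop :=
  ∀ z, Relation.ReflTransGen (Reprod T) y z → Fertile T z

/-- A pair `(y₀,y₁)` is generic w.r.t. `(T₀,T₁)`: `y₀,y₁` squarefree, coprime to each other,
and `yᵢ` coprime with `Tᵢ`. -/
def Generic (T y : ℂ[X] × ℂ[X]) : Prop :=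
  Squarefree y.1 ∧ Squarefree y.2 ∧ IsCoprime y.1 y.2 ∧
    IsCoprime y.1 T.1 ∧ IsCoprime y.2 T.2

/-- A pair represents a critical point w.r.t. `T` if it is generic and fertile w.r.t. `T`. -/
def IsCriticalPt (T y : ℂ[X] × ℂ[X]) : Prop := Generic T y ∧ Fertile T y

/-- A pair lies in a population of critical points corresponding to `T` if it is obtained by a
finite (possibly empty) sequence of reproductions from a pair representing a critical point. -/
def InPopulation (T y : ℂ[X] × ℂ[X]) : Prop :=
  ∃ y₀, IsCriticalPt T y₀ ∧ Relation.ReflTransGen (Reprod T) y₀ y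

/-! Composing with `f` multiplies every Wronskian by `f′` (chain rule), so each Wronskian
equation `Wr(y, ỹ) = T·w²` becomes `Wr(y∘f, ỹ∘f) = (f′·(T∘f))·(w∘f)²`, and fertility and
reproductions transfer step by step; `f` nonconstant keeps nonzero polynomials nonzero. -/

theorem Polynomial.comp_ne_zero_of_natDegree_pos {R : Type*} [Semiring R] [NoZeroDivisors R]
    {p q : R[X]} (hp : p ≠ 0) (hq : 0 < q.natDegree) : p.comp q ≠ 0 := by
  rw [Ne, comp_eq_zero_iff, not_or, not_and_or]
  refine ⟨hp, Or.inr fun hC => ?_⟩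
  rw [hC, natDegree_C] at hq
  exact hq.ne rfl

theorem pWr_comp (p q f : ℂ[X]) :
    pWr (p.comp f) (q.comp f) = (pWr p q).comp f * derivative f := by
  simp only [pWr, derivative_comp, sub_comp, mul_comp]
  ring

theorem pWr_comp_eq_of_pWr_eq {y ty T w : ℂ[X]} (f : ℂ[X]) (h : pWr y ty = T * w ^ 2) :
    pWr (y.comp f) (ty.comp f) = (derivative f * T.comp f) * (w.comp f) ^ 2 := by
  rw [pWr_comp, h, mul_comp, pow_comp]
  ring

def compWeights (f : ℂ[X]) (T : ℂ[X] × ℂ[X]) : ℂ[X] × ℂ[X] :=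
  (derivative f * T.1.comp f, derivative f * T.2.comp f)

def compPair (f : ℂ[X]) (y : ℂ[X] × ℂ[X]) : ℂ[X] × ℂ[X] :=
  (y.1.comp f, y.2.comp f)

theorem Fertile.comp {T y : ℂ[X] × ℂ[X]} {f : ℂ[X]} (hf : 0 < f.natDegree) (h : Fertile T y) :
    Fertile (compWeights f T) (compPair f y) := by
  obtain ⟨hy0, hy1, ty0, ty1, h0, h1⟩ := h
  exact ⟨comp_ne_zero_of_natDegree_pos hy0 hf, comp_ne_zero_of_natDegree_pos hy1 hf,
    ty0.comp f, ty1.comp f, pWr_comp_eq_of_pWr_eq f h0, pWr_comp_eq_of_pWr_eq f h1⟩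

theorem Reprod.comp {T y z : ℂ[X] × ℂ[X]} (f : ℂ[X]) (h : Reprod T y z) :
    Reprod (compWeights f T) (compPair f y) (compPair f z) := by
  rcases h with ⟨h2, h0⟩ | ⟨h1, h0⟩
  · exact Or.inl ⟨congrArg (·.comp f) h2, pWr_comp_eq_of_pWr_eq f h0⟩
  · exact Or.inr ⟨congrArg (·.comp f) h1, pWr_comp_eq_of_pWr_eq f h0⟩

theorem reflTransGen_reprod_comp {T y z : ℂ[X] × ℂ[X]} (f : ℂ[X])
    (h : Relation.ReflTransGen (Reprod T) y z) :
    Relation.ReflTransGen (Reprod (compWeights f T)) (compPair f y) (compPair f z) :=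
  Relation.ReflTransGen.lift (compPair f) (fun _ _ => Reprod.comp f) _ _ h

theorem population_change_of_variables_general (f T0 T1 y0 y1 : ℂ[X]) (hf : 0 < f.natDegree) :
    (∀ ty0 : ℂ[X], pWr y0 ty0 = T0 * y1 ^ 2 →
      pWr (y0.comp f) (ty0.comp f) =
        (derivative f * T0.comp f) * (y1.comp f) ^ 2) ∧
    (Fertile (T0, T1) (y0, y1) →
      Fertile (derivative f * T0.comp f, derivative f * T1.comp f)
        (y0.comp f, y1.comp f)) ∧
    (∀ u0 u1 : ℂ[X], Relation.ReflTransGen (Reprod (T0, T1)) (y0, y1) (u0, u1) →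
      Relation.ReflTransGen (Reprod (derivative f * T0.comp f, derivative f * T1.comp f))
        (y0.comp f, y1.comp f) (u0.comp f, u1.comp f)) :=
  ⟨fun _ => pWr_comp_eq_of_pWr_eq f, Fertile.comp hf, fun _ _ => reflTransGen_reprod_comp f⟩

/-- Change of variables in populations: composing with a nonconstant polynomial `f`
transforms Wronskian equations, fertility, and sequences of reproductions, with
`(T₀,T₁)` replaced by `(f′·(T₀∘f), f′·(T₁∘f))`. -/
theorem population_change_of_variables (f T0 T1 y0 y1 : ℂ[X]) (hf : 0 < f.natDegree)
    (hT0 : T0 ≠ 0) (hT1 : T1 ≠ 0) (hy0 : y0 ≠ 0) (hy1 : y1 ≠ 0) :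
    (∀ ty0 : ℂ[X], pWr y0 ty0 = T0 * y1 ^ 2 →
      pWr (y0.comp f) (ty0.comp f) =
        (derivative f * T0.comp f) * (y1.comp f) ^ 2) ∧
    (Fertile (T0, T1) (y0, y1) →
      Fertile (derivative f * T0.comp f, derivative f * T1.comp f)
        (y0.comp f, y1.comp f)) ∧
    (∀ u0 u1 : ℂ[X], Relation.ReflTransGen (Reprod (T0, T1)) (y0, y1) (u0, u1) →
      Relation.ReflTransGen (Reprod (derivative f * T0.comp f, derivative f * T1.comp f))
        (y0.comp f, y1.comp f) (u0.comp f, u1.comp f)) :=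
  population_change_of_variables_general f T0 T1 y0 y1 hf
end
end

section
/- Fix pairwise distinct complex numbers z₁,…,z_k and natural numbers a₁,…,a_k, b₁,…,b_k, and set T₀ = ∏_{r=1}^{k}(x−z_r)^{a_r} and T₁ = ∏_{r=1}^{k}(x−z_r)^{b_r}. Let s₁,…,s_{d₀} be pairwise distinct and t₁,…,t_{d₁} be pairwise distinct complex numbers with s_i ≠ t_j for all i,j, s_i ≠ z_r whenever a_r > 0, and t_j ≠ z_r whenever b_r > 0; set y₀ = ∏_{i=1}^{d₀}(x−s_i) and y₁ = ∏_{j=1}^{d₁}(x−t_j). If there exist polynomials ỹ₀ and ỹ₁ with Wr(y₀,ỹ₀) = T₀·y₁² and Wr(y₁,ỹ₁) = T₁·y₀², then the Bethe ansatz equations hold: for each i = 1,…,d₀, ∑_{i′ ≠ i} 2/(s_i − s_{i′}) − ∑_{j=1}^{d₁} 2/(s_i − t_j) − ∑_{r=1}^{k} a_r/(s_i − z_r) = 0, and for each j = 1,…,d₁, ∑_{j′ ≠ j} 2/(t_j − t_{j′}) − ∑_{i=1}^{d₀} 2/(t_j − s_i) − ∑_{r=1}^{k} b_r/(t_j − z_r)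 = 0. -/
/-!
Write `y₀ = (x - sᵢ) q`. As `y₀(sᵢ) = 0`, the Wronskian `F = Wr(y₀, ỹ₀)` and its derivative
`F' = y₀ ỹ₀'' - y₀'' ỹ₀` take the values `-q(sᵢ) ỹ₀(sᵢ)` and `-2 q'(sᵢ) ỹ₀(sᵢ)` at `sᵢ`, so the
logarithmic derivatives satisfy `F'/F = 2 q'/q` there (`F(sᵢ) ≠ 0` by genericity). For
`F = T₀ y₁²` and `q = ∏_{i' ≠ i} (x - s_{i'})` both sides are sums of simple fractions, which is
the Bethe equation at `sᵢ`; the roots `tⱼ` are treated symmetrically.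
-/

open Polynomial

noncomputable section

theorem eval_derivative_wronskian_X_sub_C_mul {R : Type*} [CommRing R] (c : R) (q w : R[X]) :
    (derivative ((X - C c) * q * derivative w - derivative ((X - C c) * q) * w)).eval c * q.eval c
      = 2 * ((X - C c) * q * derivative w - derivative ((X - C c) * q) * w).eval c
        * (derivative q).eval c := by
  simp only [derivative_mul, derivative_add, derivative_sub, derivative_X, derivative_C,
    derivative_one, derivative_zero, eval_add, eval_sub, eval_mul, eval_X, eval_C, eval_one,
    eval_zero, sub_self, zero_mul]
  ring

section LogarithmicDerivative

variable {K : Type*} [Field K] {x : K}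

theorem eval_derivative_mul_div_eval {p q : K[X]} (hp : p.eval x ≠ 0) (hq : q.eval x ≠ 0) :
    (derivative (p * q)).eval x / (p * q).eval x
      = (derivative p).eval x / p.eval x + (derivative q).eval x / q.eval x := by
  simp only [derivative_mul, eval_add, eval_mul]
  field_simp

theorem eval_derivative_pow_div_eval (p : K[X]) (n : ℕ) :
    (derivative (p ^ n)).eval x / (p ^ n).eval x = n * ((derivative p).eval x / p.eval x) := by
  rcases eq_or_ne (p.eval x) 0 with hp | hp
  · rcases n with _ | n <;> simp [hp]
  · rw [derivative_pow, eval_mul, eval_mul, eval_pow, eval_pow, eval_C]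
    rcases n with _ | n
    · simp
    · rw [Nat.add_sub_cancel]
      field_simp
      ring

theorem eval_prod_ne_zero {ι : Type*} {S : Finset ι} {f : ι → K[X]}
    (h : ∀ j ∈ S, (f j).eval x ≠ 0) : (∏ j ∈ S, f j).eval x ≠ 0 := by
  rw [eval_prod]
  exact Finset.prod_ne_zero_iff.2 h

theorem eval_derivative_prod_div_eval {ι : Type*} (S : Finset ι) (f : ι → K[X])
    (h : ∀ j ∈ S, (f j).eval x ≠ 0) :
    (derivative (∏ j ∈ S, f j)).eval x / (∏ j ∈ S, f j).eval x
      = ∑ j ∈ S, (derivative (f j)).eval x / (f j).eval x := by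
  induction S using Finset.cons_induction with
  | empty => simp
  | cons a S ha ih =>
    rw [Finset.forall_mem_cons] at h
    rw [Finset.prod_cons, Finset.sum_cons,
      eval_derivative_mul_div_eval h.1 (eval_prod_ne_zero h.2), ih h.2]

theorem eval_X_sub_C_pow_ne_zero {u : K} {n : ℕ} (h : 0 < n → x ≠ u) :
    ((X - C u) ^ n).eval x ≠ 0 := by
  rcases n.eq_zero_or_pos with rfl | hn
  · simp
  · simpa [sub_eq_zero, hn.ne'] using h hn

theorem eval_derivative_prod_X_sub_C_pow_div_eval {ι : Type*} (S : Finset ι) (z : ι → K)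
    (a : ι → ℕ) (h : ∀ r ∈ S, 0 < a r → x ≠ z r) :
    (derivative (∏ r ∈ S, (X - C (z r)) ^ a r)).eval x / (∏ r ∈ S, (X - C (z r)) ^ a r).eval x
      = ∑ r ∈ S, (a r : K) / (x - z r) := by
  rw [eval_derivative_prod_div_eval S _ fun r hr => eval_X_sub_C_pow_ne_zero (h r hr)]
  refine Finset.sum_congr rfl fun r _ => ?_
  rw [eval_derivative_pow_div_eval, derivative_X_sub_C]
  simp [div_eq_mul_inv]

theorem eval_derivative_prod_X_sub_C_div_eval {ι : Type*} (S : Finset ι) (s : ι → K)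
    (h : ∀ j ∈ S, x ≠ s j) :
    (derivative (∏ j ∈ S, (X - C (s j)))).eval x / (∏ j ∈ S, (X - C (s j))).eval x
      = ∑ j ∈ S, 1 / (x - s j) := by
  simpa using eval_derivative_prod_X_sub_C_pow_div_eval S s 1 fun j hj _ => h j hj

end LogarithmicDerivative

theorem bethe_equation_of_pWr_eq {k d0 d1 : ℕ} {z : Fin k → ℂ} {a : Fin k → ℕ} {s : Fin d0 → ℂ}
    {t : Fin d1 → ℂ} {w : ℂ[X]} (hs : Function.Injective s) (i : Fin d0)
    (hst : ∀ j, s i ≠ t j) (hsz : ∀ r, 0 < a r → s i ≠ z r)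
    (h : pWr (∏ i, (X - C (s i))) w = (∏ r, (X - C (z r)) ^ a r) * (∏ j, (X - C (t j))) ^ 2) :
    (∑ i2 ∈ Finset.univ.erase i, 2 / (s i - s i2)) - (∑ j, 2 / (s i - t j))
        - (∑ r, (a r : ℂ) / (s i - z r)) = 0 := by
  classical
  set c := s i
  set q := ∏ i2 ∈ Finset.univ.erase i, (X - C (s i2))
  set T := ∏ r, (X - C (z r)) ^ a r
  set y1 := ∏ j, (X - C (t j))
  have hcq : ∀ i2 ∈ Finset.univ.erase i, c ≠ s i2 := fun i2 hi2 e =>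
    Finset.ne_of_mem_erase hi2 (hs e).symm
  have hq : q.eval c ≠ 0 :=
    eval_prod_ne_zero fun i2 hi2 => by simpa [sub_eq_zero] using hcq i2 hi2
  have hT : T.eval c ≠ 0 := eval_prod_ne_zero fun r _ => eval_X_sub_C_pow_ne_zero (hsz r)
  have hy1sq : (y1 ^ 2).eval c ≠ 0 := by
    rw [eval_pow]
    exact pow_ne_zero 2 (eval_prod_ne_zero fun j _ => by simpa [sub_eq_zero] using hst j)
  have hW := eval_derivative_wronskian_X_sub_C_mul c q w
  rw [← Finset.mul_prod_erase _ (fun i2 => X - C (s i2)) (Finset.mem_univ i), pWr] at h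
  rw [h] at hW
  have hlog : (derivative (T * y1 ^ 2)).eval c / (T * y1 ^ 2).eval c
      = 2 * ((derivative q).eval c / q.eval c) := by
    rw [div_eq_iff (by rw [eval_mul]; exact mul_ne_zero hT hy1sq)]
    field_simp
    linear_combination hW
  rw [eval_derivative_mul_div_eval hT hy1sq, eval_derivative_pow_div_eval,
    eval_derivative_prod_X_sub_C_pow_div_eval _ _ _ fun r _ => hsz r,
    eval_derivative_prod_X_sub_C_div_eval _ _ fun j _ => hst j,
    eval_derivative_prod_X_sub_C_div_eval _ _ hcq] at hlog
  simp only [← mul_one_div (2 : ℂ), ← Finset.mul_sum]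
  linear_combination -hlog

theorem fertile_implies_bethe_general (k d0 d1 : ℕ) (z : Fin k → ℂ)
    (a b : Fin k → ℕ)
    (s : Fin d0 → ℂ) (hs : Function.Injective s)
    (t : Fin d1 → ℂ) (ht : Function.Injective t)
    (hst : ∀ i j, s i ≠ t j)
    (hsz : ∀ i r, 0 < a r → s i ≠ z r)
    (htz : ∀ j r, 0 < b r → t j ≠ z r)
    (T0 T1 y0 y1 : ℂ[X])
    (hT0 : T0 = ∏ r, (X - C (z r)) ^ a r)
    (hT1 : T1 = ∏ r, (X - C (z r)) ^ b r)
    (hy0 : y0 = ∏ i, (X - C (s i)))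
    (hy1 : y1 = ∏ j, (X - C (t j)))
    (hfert : ∃ ty0 ty1 : ℂ[X], pWr y0 ty0 = T0 * y1 ^ 2 ∧ pWr y1 ty1 = T1 * y0 ^ 2) :
    (∀ i, (∑ i2 ∈ Finset.univ.erase i, 2 / (s i - s i2)) - (∑ j, 2 / (s i - t j))
        - (∑ r, (a r : ℂ) / (s i - z r)) = 0) ∧
      (∀ j, (∑ j2 ∈ Finset.univ.erase j, 2 / (t j - t j2)) - (∑ i, 2 / (t j - s i))
        - (∑ r, (b r : ℂ) / (t j - z r)) = 0) := by
  obtain ⟨ty0, ty1, h0, h1⟩ := hfert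
  subst hT0 hT1 hy0 hy1
  exact ⟨fun i => bethe_equation_of_pWr_eq hs i (hst i) (hsz i) h0,
    fun j => bethe_equation_of_pWr_eq ht j (fun i => (hst i j).symm) (htz j) h1⟩

/-- If the generic pair `(y₀,y₁)` admits Wronskian witnesses (is fertile), then the Bethe
ansatz equations hold at the roots `s_i` and `t_j`. -/
theorem fertile_implies_bethe (k d0 d1 : ℕ) (z : Fin k → ℂ) (hz : Function.Injective z)
    (a b : Fin k → ℕ)
    (s : Fin d0 → ℂ) (hs : Function.Injective s)
    (t : Fin d1 → ℂ) (ht : Function.Injective t)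
    (hst : ∀ i j, s i ≠ t j)
    (hsz : ∀ i r, 0 < a r → s i ≠ z r)
    (htz : ∀ j r, 0 < b r → t j ≠ z r)
    (T0 T1 y0 y1 : ℂ[X])
    (hT0 : T0 = ∏ r, (X - C (z r)) ^ a r)
    (hT1 : T1 = ∏ r, (X - C (z r)) ^ b r)
    (hy0 : y0 = ∏ i, (X - C (s i)))
    (hy1 : y1 = ∏ j, (X - C (t j)))
    (hfert : ∃ ty0 ty1 : ℂ[X], pWr y0 ty0 = T0 * y1 ^ 2 ∧ pWr y1 ty1 = T1 * y0 ^ 2) :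
    (∀ i, (∑ i2 ∈ Finset.univ.erase i, 2 / (s i - s i2)) - (∑ j, 2 / (s i - t j))
        - (∑ r, (a r : ℂ) / (s i - z r)) = 0) ∧
      (∀ j, (∑ j2 ∈ Finset.univ.erase j, 2 / (t j - t j2)) - (∑ i, 2 / (t j - s i))
        - (∑ r, (b r : ℂ) / (t j - z r)) = 0) :=
  fertile_implies_bethe_general k d0 d1 z a b s hs t ht hst hsz htz T0 T1 y0 y1 hT0 hT1 hy0 hy1
    hfert
end
end

section
/- Fix pairwise distinct complex numbers z₁,…,z_k and natural numbers a₁,…,a_k, b₁,…,b_k, and set T₀ = ∏_{r=1}^{k}(x−z_r)^{a_r} and T₁ = ∏_{r=1}^{k}(x−z_r)^{b_r}. Let s₁,…,s_{d₀} be pairwise distinct and t₁,…,t_{d₁} be pairwise distinct complex numbers with s_i ≠ t_j for all i,j, s_i ≠ z_r whenever a_r > 0, and t_j ≠ z_r whenever b_r > 0; set y₀ = ∏_{i=1}^{d₀}(x−s_i) and y₁ = ∏_{j=1}^{d₁}(x−t_j). If the Bethe ansatz equations hold — that is, for each i = 1,…,d₀, ∑_{i′ ≠ i} 2/(s_i −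 s_{i′}) − ∑_{j=1}^{d₁} 2/(s_i − t_j) − ∑_{r=1}^{k} a_r/(s_i − z_r) = 0, and for each j = 1,…,d₁, ∑_{j′ ≠ j} 2/(t_j − t_{j′}) − ∑_{i=1}^{d₀} 2/(t_j − s_i) − ∑_{r=1}^{k} b_r/(t_j − z_r) = 0 — then there exist polynomials ỹ₀ and ỹ₁ with Wr(y₀,ỹ₀) = T₀·y₁² and Wr(y₁,ỹ₁) = T₁·y₀². -/
/-!
For `y` with simple roots `cᵢ`, a polynomial `F` lies in the image of `Wr(y, ·)` as soon as
`F'(cᵢ)·y'(cᵢ) = F(cᵢ)·y''(cᵢ)` at every root: interpolate `r` with `r(cᵢ) = -F(cᵢ)/y'(cᵢ)`; then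
`F - Wr(y, r)` vanishes to second order at every `cᵢ`, so it is `q'·y² = Wr(y, q·y)` for some `q`.
For `y = y₀` and `F = T₀·y₁²` this condition at `sᵢ` is the `i`-th Bethe equation multiplied by
`F(sᵢ)·y₀'(sᵢ)`, because `F'/F = ∑ aᵣ/(x - zᵣ) + 2∑ 1/(x - tⱼ)` and, at a root of `y₀`,
`y₀''/y₀' = 2∑_{i' ≠ i} 1/(sᵢ - s_{i'})`.
-/

open Polynomial

noncomputable section

open Finset Lagrange

section

variable {K : Type*} [Field K]

theorem exists_derivative_eq [CharZero K] (p : K[X]) : ∃ q : K[X], derivative q = p := by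
  refine ⟨p.sum fun n c => C (c / (n + 1)) * X ^ (n + 1), ?_⟩
  conv_rhs => rw [p.as_sum_support_C_mul_X_pow]
  rw [Polynomial.sum, map_sum]
  refine sum_congr rfl fun n _ => ?_
  rw [derivative_C_mul_X_pow, Nat.add_sub_cancel]
  push_cast
  rw [div_mul_cancel₀ _ (Nat.cast_add_one_ne_zero n)]

theorem eval_derivative_prod_eq_mul_sum_div {ι : Type*} (S : Finset ι) (f : ι → K[X]) {x : K}
    (hf : ∀ i ∈ S, eval x (f i) ≠ 0) :
    eval x (derivative (∏ i ∈ S, f i)) =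
      eval x (∏ i ∈ S, f i) * ∑ i ∈ S, eval x (derivative (f i)) / eval x (f i) := by
  classical
  induction S using Finset.induction_on with
  | empty => simp
  | insert a S ha ih =>
    rw [forall_mem_insert] at hf
    rw [prod_insert ha, sum_insert ha, derivative_mul, eval_add, eval_mul, eval_mul, eval_mul,
      ih hf.2]
    field_simp [hf.1]

-- At `x = c` with `e > 0` both sides are `0`, by the convention `a / 0 = 0`.
theorem eval_derivative_X_sub_C_pow_div (c x : K) (e : ℕ) :
    eval x (derivative ((X - C c) ^ e)) / eval x ((X - C c) ^ e) = e / (x - c) := by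
  rcases e with _ | e
  · simp
  by_cases hx : x = c
  · simp [hx]
  · have hxc : x - c ≠ 0 := sub_ne_zero.2 hx
    rw [derivative_X_sub_C_pow, Nat.add_sub_cancel]
    simp only [eval_mul, eval_C, eval_pow, eval_sub, eval_X]
    field_simp
    ring

theorem eval_derivative_prod_X_sub_C_pow {ι : Type*} (S : Finset ι) (c : ι → K) (e : ι → ℕ)
    {x : K} (hx : ∀ i ∈ S, 0 < e i → x ≠ c i) :
    eval x (derivative (∏ i ∈ S, (X - C (c i)) ^ e i)) =
      eval x (∏ i ∈ S, (X - C (c i)) ^ e i) * ∑ i ∈ S, (e i : K) / (x - c i) := by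
  have hne : ∀ i ∈ S, eval x ((X - C (c i)) ^ e i) ≠ 0 := fun i hi => by
    rcases Nat.eq_zero_or_pos (e i) with he | he
    · simp [he]
    · rw [eval_pow]
      exact pow_ne_zero _ (by simpa [sub_eq_zero] using hx i hi he)
  simp only [eval_derivative_prod_eq_mul_sum_div S _ hne, eval_derivative_X_sub_C_pow_div]

theorem eval_derivative_nodal {ι : Type*} (S : Finset ι) (c : ι → K) {x : K}
    (hx : ∀ i ∈ S, x ≠ c i) :
    eval x (derivative (nodal S c)) = eval x (nodal S c) * ∑ i ∈ S, 1 / (x - c i) := by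
  simpa [nodal] using eval_derivative_prod_X_sub_C_pow S c 1 fun i hi _ => hx i hi

theorem eval_derivative_derivative_nodal_at_node {ι : Type*} [DecidableEq ι] {S : Finset ι}
    {c : ι → K} (hc : Set.InjOn c S) {i : ι} (hi : i ∈ S) :
    eval (c i) (derivative (derivative (nodal S c))) =
      2 * eval (c i) (derivative (nodal S c)) * ∑ j ∈ S.erase i, 1 / (c i - c j) := by
  have hnode : ∀ j ∈ S.erase i, c i ≠ c j := fun j hj h =>
    (mem_erase.1 hj).1 (hc hi (mem_erase.1 hj).2 h).symm
  rw [eval_nodal_derivative_eval_node_eq hi, mul_assoc, ← eval_derivative_nodal _ _ hnode,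
    nodal_eq_mul_nodal_erase hi, derivative_mul, derivative_X_sub_C, one_mul, derivative_add,
    derivative_mul, derivative_X_sub_C, one_mul]
  simp only [eval_add, eval_mul, eval_sub, eval_X, eval_C, sub_self, zero_mul, add_zero]
  ring

end

theorem X_sub_C_sq_dvd_of_eval_derivative_eq_zero {R : Type*} [CommRing R] {p : R[X]} {c : R}
    (h0 : p.eval c = 0) (h1 : (derivative p).eval c = 0) : (X - C c) ^ 2 ∣ p := by
  obtain ⟨q, rfl⟩ := dvd_iff_isRoot.2 h0
  rw [derivative_mul, derivative_X_sub_C, one_mul, eval_add, eval_mul, eval_sub, eval_X,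
    eval_C, sub_self, zero_mul, add_zero] at h1
  obtain ⟨r, rfl⟩ := dvd_iff_isRoot.2 h1
  exact ⟨r, by ring⟩

theorem pWr_add_right (f g h : ℂ[X]) : pWr f (g + h) = pWr f g + pWr f h := by
  simp only [pWr, derivative_add]
  ring

theorem pWr_mul_self_right (f q : ℂ[X]) : pWr f (q * f) = derivative q * f ^ 2 := by
  simp only [pWr, derivative_mul]
  ring

theorem exists_pWr_eq_of_sq_dvd_sub {y r F : ℂ[X]} (h : y ^ 2 ∣ F - pWr y r) :
    ∃ w, pWr y w = F := by
  obtain ⟨g, hg⟩ := h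
  obtain ⟨q, rfl⟩ := exists_derivative_eq g
  exact ⟨q * y + r, by rw [pWr_add_right, pWr_mul_self_right, mul_comm, ← hg, sub_add_cancel]⟩

theorem X_sub_C_sq_dvd_sub_pWr {y r F : ℂ[X]} {c : ℂ} (hy : y.eval c = 0)
    (hy' : (derivative y).eval c ≠ 0) (hr : r.eval c * (derivative y).eval c = -F.eval c)
    (hF : (derivative F).eval c * (derivative y).eval c =
      F.eval c * (derivative (derivative y)).eval c) :
    (X - C c) ^ 2 ∣ F - pWr y r := by
  apply X_sub_C_sq_dvd_of_eval_derivative_eq_zero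
  · simp only [pWr, eval_sub, eval_mul, hy]
    linear_combination hr
  · simp only [pWr, derivative_sub, derivative_mul, eval_sub, eval_add, eval_mul, hy]
    have key : (eval c (derivative F) + eval c (derivative (derivative y)) * eval c r) *
        eval c (derivative y) = 0 := by
      linear_combination hF + eval c (derivative (derivative y)) * hr
    linear_combination (mul_eq_zero.1 key).resolve_right hy'

theorem exists_pWr_nodal_eq {ι : Type*} [DecidableEq ι] (S : Finset ι) {c : ι → ℂ}
    (hc : Set.InjOn c S) (F : ℂ[X])
    (hF : ∀ i ∈ S, (derivative F).eval (c i) * (derivative (nodal S c)).eval (c i) =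
      F.eval (c i) * (derivative (derivative (nodal S c))).eval (c i)) :
    ∃ w, pWr (nodal S c) w = F := by
  have hy' : ∀ i ∈ S, (derivative (nodal S c)).eval (c i) ≠ 0 := fun i hi h =>
    nodalWeight_ne_zero hc hi (by rw [nodalWeight_eq_eval_derivative_nodal hi, h, inv_zero])
  refine exists_pWr_eq_of_sq_dvd_sub
    (r := interpolate S c fun i => -F.eval (c i) / (derivative (nodal S c)).eval (c i)) ?_
  rw [show nodal S c ^ 2 = ∏ i ∈ S, (X - C (c i)) ^ 2 from (prod_pow S 2 _).symm]
  refine prod_dvd_of_coprime (fun i hi j hj hij => ?_) fun i hi =>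
    X_sub_C_sq_dvd_sub_pWr (eval_nodal_at_node hi) (hy' i hi) ?_ (hF i hi)
  · exact (isCoprime_X_sub_C_of_isUnit_sub
      (sub_ne_zero.2 fun h => hij (hc hi hj h)).isUnit).pow
  · rw [eval_interpolate_at_node _ hc hi, div_mul_cancel₀ _ (hy' i hi)]

theorem eval_derivative_mul_eq_of_bethe {K ι κ ρ : Type*} [Field K] [Fintype ι] [DecidableEq ι]
    [Fintype κ] [Fintype ρ] {z : ρ → K} {a : ρ → ℕ} {s : ι → K} (hs : Function.Injective s)
    {t : κ → K} {i : ι} (hst : ∀ j, s i ≠ t j) (hsz : ∀ r, 0 < a r → s i ≠ z r)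
    (hbae : (∑ i2 ∈ univ.erase i, 2 / (s i - s i2)) - (∑ j, 2 / (s i - t j))
      - (∑ r, (a r : K) / (s i - z r)) = 0) :
    (derivative ((∏ r, (X - C (z r)) ^ a r) * nodal univ t ^ 2)).eval (s i) *
        (derivative (nodal univ s)).eval (s i) =
      ((∏ r, (X - C (z r)) ^ a r) * nodal univ t ^ 2).eval (s i) *
        (derivative (derivative (nodal univ s))).eval (s i) := by
  rw [eval_derivative_derivative_nodal_at_node hs.injOn (mem_univ i), derivative_mul,
    derivative_sq]
  simp only [eval_add, eval_mul, eval_pow, eval_C]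
  rw [eval_derivative_prod_X_sub_C_pow _ _ _ fun r _ => hsz r,
    eval_derivative_nodal _ _ fun j _ => hst j]
  simp only [div_eq_mul_one_div (2 : K), ← mul_sum] at hbae
  linear_combination -(eval (s i) (∏ r, (X - C (z r)) ^ a r) * eval (s i) (nodal univ t) ^ 2 *
    eval (s i) (derivative (nodal univ s))) * hbae

theorem bethe_implies_fertile_general (k d0 d1 : ℕ) (z : Fin k → ℂ)
    (a b : Fin k → ℕ)
    (s : Fin d0 → ℂ) (hs : Function.Injective s)
    (t : Fin d1 → ℂ) (ht : Function.Injective t)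
    (hst : ∀ i j, s i ≠ t j)
    (hsz : ∀ i r, 0 < a r → s i ≠ z r)
    (htz : ∀ j r, 0 < b r → t j ≠ z r)
    (T0 T1 y0 y1 : ℂ[X])
    (hT0 : T0 = ∏ r, (X - C (z r)) ^ a r)
    (hT1 : T1 = ∏ r, (X - C (z r)) ^ b r)
    (hy0 : y0 = ∏ i, (X - C (s i)))
    (hy1 : y1 = ∏ j, (X - C (t j)))
    (hbae : (∀ i, (∑ i2 ∈ Finset.univ.erase i, 2 / (s i - s i2)) - (∑ j, 2 / (s i - t j))
        - (∑ r, (a r : ℂ) / (s i - z r)) = 0) ∧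
      (∀ j, (∑ j2 ∈ Finset.univ.erase j, 2 / (t j - t j2)) - (∑ i, 2 / (t j - s i))
        - (∑ r, (b r : ℂ) / (t j - z r)) = 0)) :
    ∃ ty0 ty1 : ℂ[X], pWr y0 ty0 = T0 * y1 ^ 2 ∧ pWr y1 ty1 = T1 * y0 ^ 2 := by
  obtain ⟨hbae0, hbae1⟩ := hbae
  subst hT0 hT1 hy0 hy1
  obtain ⟨w0, hw0⟩ := exists_pWr_nodal_eq univ hs.injOn _ fun i _ =>
    eval_derivative_mul_eq_of_bethe hs (hst i) (hsz i) (hbae0 i)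
  obtain ⟨w1, hw1⟩ := exists_pWr_nodal_eq univ ht.injOn _ fun j _ =>
    eval_derivative_mul_eq_of_bethe ht (fun i => (hst i j).symm) (htz j) (hbae1 j)
  exact ⟨w0, w1, hw0, hw1⟩

/-- If the Bethe ansatz equations hold at the roots `s_i` and `t_j`, then there exist
Wronskian witnesses `ỹ₀, ỹ₁` (the pair `(y₀,y₁)` is fertile). -/
theorem bethe_implies_fertile (k d0 d1 : ℕ) (z : Fin k → ℂ) (hz : Function.Injective z)
    (a b : Fin k → ℕ)
    (s : Fin d0 → ℂ) (hs : Function.Injective s)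
    (t : Fin d1 → ℂ) (ht : Function.Injective t)
    (hst : ∀ i j, s i ≠ t j)
    (hsz : ∀ i r, 0 < a r → s i ≠ z r)
    (htz : ∀ j r, 0 < b r → t j ≠ z r)
    (T0 T1 y0 y1 : ℂ[X])
    (hT0 : T0 = ∏ r, (X - C (z r)) ^ a r)
    (hT1 : T1 = ∏ r, (X - C (z r)) ^ b r)
    (hy0 : y0 = ∏ i, (X - C (s i)))
    (hy1 : y1 = ∏ j, (X - C (t j)))
    (hbae : (∀ i, (∑ i2 ∈ Finset.univ.erase i, 2 / (s i - s i2)) - (∑ j, 2 / (s i - t j))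
        - (∑ r, (a r : ℂ) / (s i - z r)) = 0) ∧
      (∀ j, (∑ j2 ∈ Finset.univ.erase j, 2 / (t j - t j2)) - (∑ i, 2 / (t j - s i))
        - (∑ r, (b r : ℂ) / (t j - z r)) = 0)) :
    ∃ ty0 ty1 : ℂ[X], pWr y0 ty0 = T0 * y1 ^ 2 ∧ pWr y1 ty1 = T1 * y0 ^ 2 :=
  bethe_implies_fertile_general k d0 d1 z a b s hs t ht hst hsz htz T0 T1 y0 y1 hT0 hT1 hy0 hy1 hbae
end
end
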